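/- Let A be an abelian group (written multiplicatively), let ψ be an automorphism of A, and let m be a positive integer. On the product group B = Fin m → A (with pointwise multiplication) define the automorphism Ψ by (Ψ b)(i) = b(i−1) for 1 ≤ i ≤ m−1 and (Ψ b)(0) = ψ(b(m−1)) (the cyclic shift twisted by ψ). Then the inclusion of A into B as the 0-th coordinate induces an isomorphism of coinvariant groups A_ψ ≅ B_Ψ. -/

import Mathlib

/-! The inverse of the map induced by `Pi.mulSingle 0` is induced by the product map
`b ↦ ∏ i, b i`, which descends to coinvariants because `∏ i, (Ψ b / b) i = ψ (b (-1)) / b (-1)`.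
The two maps are mutually inverse because in `B_Ψ` the class of `Pi.mulSingle i x` equals that
of `Pi.mulSingle (i + 1) x` (of `Pi.mulSingle 0 (ψ x)` when `i + 1 = 0`), so every coordinate
can be moved to position `0`. -/

/-- The automorphism `Ψ` of `B = Fin m → A` given by the cyclic shift twisted by `ψ`:
`(Ψ b) i = b (i - 1)` for `i ≠ 0` and `(Ψ b) 0 = ψ (b (m - 1))` (here `i - 1` is the
cyclic subtraction in `Fin m`, so `0 - 1 = m - 1`). -/
def shiftAut {A : Type*} [CommGroup A] (ψ : A ≃* A) (m : ℕ) [NeZero m] :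
    (Fin m → A) ≃* (Fin m → A) where
  toFun b i := if i = 0 then ψ (b (i - 1)) else b (i - 1)
  invFun b i := if i + 1 = 0 then ψ.symm (b (i + 1)) else b (i + 1)
  left_inv b := by
    funext i
    by_cases h : i + 1 = 0
    · simp [h, add_sub_cancel_right, eq_neg_of_add_eq_zero_left h]
    · simp [h, add_sub_cancel_right]
  right_inv b := by
    funext i
    by_cases h : i = 0
    · simp [h, sub_add_cancel]
    · simp [h, sub_add_cancel]
  map_mul' b b' := by
    funext i
    by_cases h : i = 0
    · simp [h]
    · simp [h]

/-- The group of `σ`-coinvariants `X_σ` of an automorphism `σ` of an abelian group `X`: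
the quotient of `X` by the subgroup `{σ x * x⁻¹ : x ∈ X}`. -/
abbrev coinvariants {X : Type*} [CommGroup X] (σ : X ≃* X) :=
  X ⧸ (σ.toMonoidHom / MonoidHom.id X).range

namespace coinvariants

variable {X : Type*} [CommGroup X] (σ : X ≃* X)

theorem div_mem (x : X) : σ x / x ∈ (σ.toMonoidHom / MonoidHom.id X).range :=
  ⟨x, rfl⟩

theorem mk_apply (x : X) : (QuotientGroup.mk (σ x) : coinvariants σ) = QuotientGroup.mk x :=
  QuotientGroup.eq_iff_div_mem.2 (div_mem σ x)

variable {Y : Type*} [CommGroup Y] {τ : Y ≃* Y}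

def map (f : X →* Y)
    (hf : ∀ x, (QuotientGroup.mk (f (σ x)) : coinvariants τ) = QuotientGroup.mk (f x)) :
    coinvariants σ →* coinvariants τ :=
  QuotientGroup.map _ _ f <| by
    rintro _ ⟨x, rfl⟩
    rw [Subgroup.mem_comap, ← QuotientGroup.eq_one_iff]
    change (QuotientGroup.mk (f (σ x / x)) : coinvariants τ) = 1
    rw [map_div, QuotientGroup.mk_div, hf, div_self']

end coinvariants

def piProd (ι M : Type*) [Fintype ι] [CommMonoid M] : (ι → M) →* M where
  toFun b := ∏ i, b i
  map_one' := Finset.prod_const_one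
  map_mul' _ _ := Finset.prod_mul_distrib

theorem piProd_apply {ι M : Type*} [Fintype ι] [CommMonoid M] (b : ι → M) :
    piProd ι M b = ∏ i, b i :=
  rfl

theorem piProd_mulSingle {ι M : Type*} [Fintype ι] [DecidableEq ι] [CommMonoid M] (i : ι)
    (x : M) : piProd ι M (Pi.mulSingle i x) = x := by
  simp [piProd_apply]

section shiftAut

variable {A : Type*} [CommGroup A] (ψ : A ≃* A) {m : ℕ} [NeZero m]

theorem shiftAut_apply (b : Fin m → A) (i : Fin m) :
    shiftAut ψ m b i = if i = 0 then ψ (b (i - 1)) else b (i - 1) :=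
  rfl

theorem shiftAut_eq_mulSingle_mul (b : Fin m → A) :
    shiftAut ψ m b = Pi.mulSingle 0 (ψ (b (-1)) / b (-1)) * fun i => b (i - 1) := by
  funext i
  by_cases hi : i = 0
  · subst hi; simp [shiftAut_apply]
  · simp [shiftAut_apply, hi]

theorem piProd_shiftAut (b : Fin m → A) :
    piProd (Fin m) A (shiftAut ψ m b) = ψ (b (-1)) / b (-1) * piProd (Fin m) A b := by
  rw [shiftAut_eq_mulSingle_mul, map_mul, piProd_mulSingle, piProd_apply, piProd_apply]
  exact congrArg _ ((Equiv.subRight 1).prod_comp b)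

theorem shiftAut_mulSingle (i : Fin m) (x : A) :
    shiftAut ψ m (Pi.mulSingle i x) = Pi.mulSingle (i + 1) (if i + 1 = 0 then ψ x else x) := by
  funext j
  simp only [shiftAut_apply, Pi.mulSingle_apply, sub_eq_iff_eq_add]
  split_ifs <;> simp_all

theorem mk_mulSingle_eq_mk_mulSingle_zero (i : Fin m) (x : A) :
    (QuotientGroup.mk (Pi.mulSingle i x) : coinvariants (shiftAut ψ m)) =
      QuotientGroup.mk (Pi.mulSingle 0 x) := by
  obtain ⟨n, rfl⟩ := Nat.exists_eq_succ_of_ne_zero (NeZero.ne m)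
  induction i using Fin.induction with
  | zero => rfl
  | succ i ih =>
    have h := shiftAut_mulSingle ψ i.castSucc x
    rw [Fin.coeSucc_eq_succ, if_neg (Fin.succ_ne_zero i)] at h
    rw [← h, coinvariants.mk_apply, ih]

theorem mk_mulSingle_zero_apply (x : A) :
    (QuotientGroup.mk (Pi.mulSingle 0 (ψ x)) : coinvariants (shiftAut ψ m)) =
      QuotientGroup.mk (Pi.mulSingle 0 x) := by
  have h := shiftAut_mulSingle ψ (-1 : Fin m) x
  rw [neg_add_cancel, if_pos rfl] at h
  rw [← h, coinvariants.mk_apply, mk_mulSingle_eq_mk_mulSingle_zero]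

end shiftAut

/-- Let `A` be a multiplicative abelian group with an automorphism `ψ`
and let `m` be a positive integer.  On `B = Fin m → A` consider the automorphism `Ψ`
given by the cyclic shift twisted by `ψ` (i.e. `(Ψ b) i = b (i - 1)` for `1 ≤ i ≤ m - 1`
and `(Ψ b) 0 = ψ (b (m - 1))`).  Then the inclusion of `A` into `B` as the `0`-th
coordinate induces an isomorphism of coinvariant groups `A_ψ ≅ B_Ψ`. -/
theorem stmt_6 {A : Type*} [CommGroup A] (ψ : A ≃* A) (m : ℕ) [NeZero m] :
    ∃ e : coinvariants ψ ≃* coinvariants (shiftAut ψ m),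
      ∀ a : A, e (QuotientGroup.mk a) = QuotientGroup.mk (Pi.mulSingle (0 : Fin m) a) := by
  let f : coinvariants ψ →* coinvariants (shiftAut ψ m) :=
    coinvariants.map ψ (MonoidHom.mulSingle (fun _ : Fin m => A) 0) fun a => by
      simp only [MonoidHom.mulSingle_apply, mk_mulSingle_zero_apply]
  let g : coinvariants (shiftAut ψ m) →* coinvariants ψ :=
    coinvariants.map (shiftAut ψ m) (piProd (Fin m) A) fun b => by
      rw [piProd_shiftAut, QuotientGroup.mk_mul, QuotientGroup.mk_div, coinvariants.mk_apply,
        div_self', one_mul]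
  have hgf : g.comp f = MonoidHom.id _ := by
    ext a
    change (QuotientGroup.mk (piProd (Fin m) A (Pi.mulSingle 0 a)) : coinvariants ψ) =
      QuotientGroup.mk a
    rw [piProd_mulSingle]
  have hfg : f.comp g = MonoidHom.id _ := by
    ext i x
    change (QuotientGroup.mk (Pi.mulSingle 0 (piProd (Fin m) A (Pi.mulSingle i x))) :
      coinvariants (shiftAut ψ m)) = QuotientGroup.mk (Pi.mulSingle i x)
    rw [piProd_mulSingle, mk_mulSingle_eq_mk_mulSingle_zero ψ i]
  exact ⟨f.toMulEquiv g hgf hfg, fun _ => rfl⟩
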